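/- arXiv:math/0608229 — 2 statements merged into one kernel-verified Lean document; each statement's English description precedes it below -/
import Mathlib

section
/- Let X be a (q+1)-regular graph (q≥1) on which Γ acts freely and with finite quotient B=X/Γ. For every real u with 0<|u|<1/q, setting v:=1/(qu), the completed zeta function Ξ_{X,Γ}(u) := (1+qu²)^{|VB|}·det_Γ(Δ(u))^{−1} satisfies the functional equation Ξ_{X,Γ}(u) = Ξ_{X,Γ}(1/(qu)), i.e. (1+qu²)^{|VB|}·det_Γ(Δ(u))^{−1} = (1+qv²)^{|VB|}·det_Γ(Δ(v))^{−1}. (Via the determinant formula Z_{X,Γ}(u)=(1−u²)^{χ(B)}det_Γ(Δ(u))^{−1}, this expression equals (1−u²)^{−χ(B)}(1+qu²)^{|VB|}Z_{X,Γ}(u).) -/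
/-
For `|u| < 1/q` the operator `Δ(u) = (1+qu²) - uA` has positive spectrum: edge reversal
`e ↦ ē` makes `A` self-adjoint, Cauchy–Schwarz on each vertex star gives `‖A‖ ≤ q+1`, and
`1 + qu² - (q+1)|u| = (1-|u|)(1-q|u|) > 0`. Moreover `Δ(1/(qu)) = (qu²)⁻¹ Δ(u)`, and
`log (λH) = log λ + log H` for such `H`, so `det_Γ Δ(1/(qu)) = (qu²)^{-|VB|} det_Γ Δ(u)`.
The prefactors differ by the same power, since `1 + q (1/(qu))² = (qu²)⁻¹ (1 + qu²)`.
-/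

noncomputable section

/-- `Δ(u) := (1+qu²)I − uA` on `ℓ²(VX)`. -/
def DeltaOp {V : Type*}
    (A : lp (fun _ : V => ℂ) 2 →L[ℂ] lp (fun _ : V => ℂ) 2) (q : ℕ) (u : ℝ) :
    lp (fun _ : V => ℂ) 2 →L[ℂ] lp (fun _ : V => ℂ) 2 :=
  ((1 + (q : ℝ) * u ^ 2 : ℝ) : ℂ) • 1 - ((u : ℝ) : ℂ) • A

/-- `det_Γ(H) := exp(Tr_Γ(log H))`, where, for a free cofinite action (so that all
vertex stabilizers are trivial), `Tr_Γ(B) = Σ_{v∈𝓕₀} ⟨Bδ_v, δ_v⟩`, and `log` is given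
by the continuous functional calculus. -/
def detGammaV {V : Type*} [DecidableEq V] (F0 : Set V)
    (H : lp (fun _ : V => ℂ) 2 →L[ℂ] lp (fun _ : V => ℂ) 2) : ℂ :=
  Complex.exp (∑' w : F0, ((cfc (instCFC := IsSelfAdjoint.instContinuousFunctionalCalculus) Real.log H) (lp.single 2 (w : V) 1)) (w : V))

open scoped ComplexConjugate

theorem lp.hasSum_norm_sq {α : Type*} {E : α → Type*} [∀ i, NormedAddCommGroup (E i)]
    (f : lp E 2) : HasSum (fun i => ‖f i‖ ^ 2) (‖f‖ ^ 2) := by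
  simpa using lp.hasSum_norm (p := 2) (by norm_num) f

theorem HasSum.tsum_fiberwise_subtype {M E V : Type*} [AddCommGroup M] [UniformSpace M]
    [IsUniformAddGroup M] [CompleteSpace M] [T2Space M] {f : E → M} {a : M} (hf : HasSum f a)
    (π : E → V) : HasSum (fun v => ∑' e : {e // π e = v}, f e) a :=
  hf.tsum_fiberwise π

theorem hasSum_comp_of_card_fiber {E V : Type*} {π : E → V} {m : ℕ}
    [∀ v, Finite {e // π e = v}] (hcard : ∀ v, Nat.card {e // π e = v} = m)
    {g : V → ℝ} {a : ℝ} (hg0 : ∀ v, 0 ≤ g v) (hg : HasSum g a) :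
    HasSum (fun e => g (π e)) (m * a) := by
  have hfiber : ∀ v, ∑' e : {e // π e = v}, g (π e) = m * g v := fun v => by
    rw [tsum_congr fun e : {e // π e = v} => congrArg g e.2, tsum_const, hcard, nsmul_eq_mul]
  have hsum : Summable fun e => g (π e) := by
    refine (Equiv.sigmaFiberEquiv π).summable_iff.mp <|
      (summable_sigma_of_nonneg fun _ => hg0 _).mpr ⟨fun _ => .of_finite, ?_⟩
    simpa only [Function.comp_apply, Equiv.sigmaFiberEquiv_apply, hfiber]
      using (hg.mul_left (m : ℝ)).summable
  have hfiberwise := hsum.hasSum.tsum_fiberwise_subtype π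
  simp only [hfiber] at hfiberwise
  exact (hg.mul_left (m : ℝ)).unique hfiberwise ▸ hsum.hasSum

theorem pos_of_mem_spectrum_algebraMap_sub {𝒜 : Type*} [NormedRing 𝒜] [NormedAlgebra ℝ 𝒜]
    [CompleteSpace 𝒜] {c : ℝ} {a : 𝒜} (h : ‖a‖ * ‖(1 : 𝒜)‖ < c) {x : ℝ}
    (hx : x ∈ spectrum ℝ (algebraMap ℝ 𝒜 c - a)) : 0 < x := by
  rw [← spectrum.singleton_sub_eq, Set.singleton_sub] at hx
  obtain ⟨y, hy, rfl⟩ := hx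
  have := spectrum.norm_le_norm_mul_of_mem hy
  rw [Real.norm_eq_abs] at this
  linarith [le_abs_self y]

theorem card_fiber_eq_of_involutive {V E : Type*} {o t : E → V} {bar : E → E}
    (hbar : Function.Involutive bar) (ho_bar : ∀ e, o (bar e) = t e) (v : V) :
    Nat.card {e // t e = v} = Nat.card {e // o e = v} :=
  Nat.card_congr <| (hbar.toPerm bar).subtypeEquiv fun e => by simp [ho_bar]

def IsAdjacencyOp {V E : Type*} (o t : E → V)
    (A : lp (fun _ : V => ℂ) 2 →L[ℂ] lp (fun _ : V => ℂ) 2) : Prop :=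
  ∀ (f : lp (fun _ : V => ℂ) 2) (v : V), A f v = ∑' e : {e : E // o e = v}, f (t e)

namespace IsAdjacencyOp

variable {V E : Type*} {o t : E → V} {A : lp (fun _ : V => ℂ) 2 →L[ℂ] lp (fun _ : V => ℂ) 2}

theorem apply_eq_sum (hA : IsAdjacencyOp o t A) (f : lp (fun _ : V => ℂ) 2) (v : V)
    [Fintype {e // o e = v}] : A f v = ∑ e : {e // o e = v}, f (t e) := by
  rw [hA f v, tsum_fintype]

variable {m n : ℕ} [∀ v, Finite {e // o e = v}] [∀ v, Finite {e // t e = v}]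

theorem summable_conj_mul (ho : ∀ v, Nat.card {e // o e = v} = m)
    (ht : ∀ v, Nat.card {e // t e = v} = n) (f g : lp (fun _ : V => ℂ) 2) :
    Summable fun e => conj (f (t e)) * g (o e) := by
  have hf := hasSum_comp_of_card_fiber ht (fun _ => sq_nonneg _) (lp.hasSum_norm_sq f)
  have hg := hasSum_comp_of_card_fiber ho (fun _ => sq_nonneg _) (lp.hasSum_norm_sq g)
  refine .of_norm <| .of_nonneg_of_le (fun _ => norm_nonneg _) (fun e => ?_)
    (hf.add hg).summable
  rw [norm_mul, RCLike.norm_conj]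
  nlinarith [sq_nonneg (‖f (t e)‖ - ‖g (o e)‖), norm_nonneg (f (t e)), norm_nonneg (g (o e))]

theorem inner_apply_left (hA : IsAdjacencyOp o t A) (ho : ∀ v, Nat.card {e // o e = v} = m)
    (ht : ∀ v, Nat.card {e // t e = v} = n) (f g : lp (fun _ : V => ℂ) 2) :
    inner ℂ (A f) g = ∑' e, conj (f (t e)) * g (o e) := by
  rw [lp.inner_eq_tsum, ← ((summable_conj_mul ho ht f g).hasSum.tsum_fiberwise_subtype o).tsum_eq]
  refine tsum_congr fun v => ?_
  have := Fintype.ofFinite {e // o e = v}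
  rw [hA.apply_eq_sum, tsum_fintype, RCLike.inner_apply', map_sum, Finset.sum_mul]
  exact Finset.sum_congr rfl fun e _ => by rw [e.2]

theorem isSelfAdjoint (hA : IsAdjacencyOp o t A) (ho : ∀ v, Nat.card {e // o e = v} = m)
    (ht : ∀ v, Nat.card {e // t e = v} = n) {bar : E → E} (hbar : Function.Involutive bar)
    (ho_bar : ∀ e, o (bar e) = t e) : IsSelfAdjoint A := by
  refine ContinuousLinearMap.isSelfAdjoint_iff_isSymmetric.mpr fun f g => ?_
  have ht_bar : ∀ e, t (bar e) = o e := fun e => by rw [← ho_bar, hbar]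
  calc inner ℂ (A f) g = ∑' e, conj (f (t e)) * g (o e) := hA.inner_apply_left ho ht f g
    _ = ∑' e, conj (conj (g (t e)) * f (o e)) := by
      rw [← (hbar.toPerm bar).tsum_eq]
      refine tsum_congr fun e => ?_
      simp only [Function.Involutive.coe_toPerm, ho_bar, ht_bar, map_mul, Complex.conj_conj,
        mul_comm]
    _ = inner ℂ f (A g) := by
      rw [← Complex.conj_tsum, ← hA.inner_apply_left ho ht g f, inner_conj_symm]

theorem norm_apply_sq_le (hA : IsAdjacencyOp o t A) (ho : ∀ v, Nat.card {e // o e = v} = m)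
    (ht : ∀ v, Nat.card {e // t e = v} = n) (f : lp (fun _ : V => ℂ) 2) :
    ‖A f‖ ^ 2 ≤ m * n * ‖f‖ ^ 2 := by
  have hpoint : ∀ v, ‖A f v‖ ^ 2 ≤ m * ∑' e : {e // o e = v}, ‖f (t e)‖ ^ 2 := fun v => by
    have := Fintype.ofFinite {e // o e = v}
    have hcard : ((Finset.univ : Finset {e // o e = v}).card : ℝ) = m := by
      rw [Finset.card_univ, ← Nat.card_eq_fintype_card, ho]
    rw [hA.apply_eq_sum, tsum_fintype, ← hcard]
    calc ‖∑ e : {e // o e = v}, f (t e)‖ ^ 2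
        ≤ (∑ e : {e // o e = v}, ‖f (t e)‖) ^ 2 := by gcongr; exact norm_sum_le _ _
      _ ≤ _ := sq_sum_le_card_mul_sum_sq
  have hedges := hasSum_comp_of_card_fiber ht (fun _ => sq_nonneg _) (lp.hasSum_norm_sq f)
  have hfiberwise := (hedges.summable.hasSum.tsum_fiberwise_subtype o).mul_left (m : ℝ)
  rw [hedges.tsum_eq, ← mul_assoc] at hfiberwise
  exact hasSum_le hpoint (lp.hasSum_norm_sq (A f)) hfiberwise

theorem opNorm_le (hA : IsAdjacencyOp o t A) (ho : ∀ v, Nat.card {e // o e = v} = m)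
    (ht : ∀ v, Nat.card {e // t e = v} = n) : ‖A‖ ≤ √(m * n) := by
  refine A.opNorm_le_bound (Real.sqrt_nonneg _) fun f => ?_
  rw [← Real.sqrt_sq (norm_nonneg (A f)), ← Real.sqrt_sq (norm_nonneg f),
    ← Real.sqrt_mul (by positivity)]
  exact Real.sqrt_le_sqrt (hA.norm_apply_sq_le ho ht f)

end IsAdjacencyOp

section DeltaOp

variable {V : Type*} {A : lp (fun _ : V => ℂ) 2 →L[ℂ] lp (fun _ : V => ℂ) 2} {q : ℕ}

theorem isSelfAdjoint_DeltaOp (hA : IsSelfAdjoint A) (u : ℝ) : IsSelfAdjoint (DeltaOp A q u) :=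
  (IsSelfAdjoint.smul (Complex.conj_ofReal _) (.one _)).sub
    (IsSelfAdjoint.smul (Complex.conj_ofReal u) hA)

theorem pos_of_mem_spectrum_DeltaOp (hA : ‖A‖ ≤ q + 1) {u : ℝ} (hu : |u| < 1 / q) {x : ℝ}
    (hx : x ∈ spectrum ℝ (DeltaOp A q u)) : 0 < x := by
  have hq : (1 : ℝ) ≤ q :=
    Nat.one_le_cast.mpr (Nat.cast_pos.mp (one_div_pos.mp ((abs_nonneg u).trans_lt hu)))
  have hqu : q * |u| < 1 := by rwa [lt_div_iff₀ (by positivity), mul_comm] at hu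
  have hDelta : DeltaOp A q u = algebraMap ℝ _ (1 + q * u ^ 2) - (u : ℂ) • A := by
    rw [DeltaOp, Algebra.algebraMap_eq_smul_one, RCLike.real_smul_eq_coe_smul (K := ℂ)]
    rfl
  rw [hDelta] at hx
  refine pos_of_mem_spectrum_algebraMap_sub ?_ hx
  calc ‖(u : ℂ) • A‖ * ‖(1 : lp (fun _ : V => ℂ) 2 →L[ℂ] lp (fun _ : V => ℂ) 2)‖
      ≤ ‖(u : ℂ) • A‖ := mul_le_of_le_one_right (norm_nonneg _) ContinuousLinearMap.norm_id_le
    _ ≤ |u| * (q + 1) := by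
        rw [norm_smul, Complex.norm_real, Real.norm_eq_abs]
        gcongr
    _ < 1 + q * u ^ 2 := by
        have hu1 : |u| < 1 := by nlinarith [abs_nonneg u]
        nlinarith [sq_abs u, mul_pos (sub_pos.mpr hu1) (sub_pos.mpr hqu)]

theorem DeltaOp_one_div_mul {u : ℝ} (hq : (q : ℝ) ≠ 0) (hu : u ≠ 0) :
    DeltaOp A q (1 / (q * u)) = ((q : ℝ) * u ^ 2)⁻¹ • DeltaOp A q u := by
  rw [DeltaOp, DeltaOp, smul_sub, ← smul_assoc, ← smul_assoc, Complex.real_smul,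
    Complex.real_smul, ← Complex.ofReal_mul, ← Complex.ofReal_mul]
  congr 4 <;> field_simp; ring

end DeltaOp

def vertexTrace {V : Type*} [DecidableEq V] (F0 : Set V)
    (T : lp (fun _ : V => ℂ) 2 →L[ℂ] lp (fun _ : V => ℂ) 2) : ℂ :=
  ∑' w : F0, T (lp.single 2 (w : V) 1) w

section detGamma

variable {V : Type*} [DecidableEq V] {F0 : Set V}

theorem detGammaV_eq_exp_vertexTrace (H : lp (fun _ : V => ℂ) 2 →L[ℂ] lp (fun _ : V => ℂ) 2) :
    detGammaV F0 H = Complex.exp (vertexTrace F0 (CFC.log H)) :=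
  rfl

theorem vertexTrace_algebraMap_add (hF0 : F0.Finite) (r : ℝ)
    (T : lp (fun _ : V => ℂ) 2 →L[ℂ] lp (fun _ : V => ℂ) 2) :
    vertexTrace F0 (algebraMap ℝ _ r + T) = Nat.card F0 * r + vertexTrace F0 T := by
  have := hF0.fintype
  simp only [vertexTrace, tsum_fintype, add_apply, lp.coeFn_add,
    Pi.add_apply, Algebra.algebraMap_eq_smul_one, smul_apply,
    one_apply_eq_self, lp.coeFn_smul, Pi.smul_apply, lp.single_apply_self,
    Complex.real_smul, mul_one, Finset.sum_add_distrib, Finset.sum_const, Finset.card_univ,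
    Nat.card_eq_fintype_card, nsmul_eq_mul]

theorem detGammaV_smul (hF0 : F0.Finite) {H : lp (fun _ : V => ℂ) 2 →L[ℂ] lp (fun _ : V => ℂ) 2}
    (hH : IsSelfAdjoint H) (hspec : ∀ x ∈ spectrum ℝ H, x ≠ 0) {k : ℝ} (hk : k ≠ 0) :
    detGammaV F0 (k • H) = ((|k| : ℝ) : ℂ) ^ Nat.card F0 * detGammaV F0 H := by
  have hlog : CFC.log (k • H) = algebraMap ℝ _ (Real.log k) + CFC.log H :=
    CFC.log_smul H hspec hk
  rw [detGammaV_eq_exp_vertexTrace, detGammaV_eq_exp_vertexTrace, hlog,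
    vertexTrace_algebraMap_add hF0, Complex.exp_add, Complex.exp_nat_mul, ← Complex.ofReal_exp,
    Real.exp_log_eq_abs hk]

end detGamma

theorem functional_equation_Xi_general
    {V E : Type*} [DecidableEq V]
    -- the graph in the sense of Serre, connected
    (o t : E → V) (bar : E → E)
    (hbar_invol : ∀ e, bar (bar e) = e)
    (ho_bar : ∀ e, o (bar e) = t e)
    -- (q+1)-regular, q ≥ 1
    (q : ℕ)
    (hreg : ∀ v, Nat.card {e // o e = v} = q + 1)
    -- cofinitely: 𝓕₀ (the vertices of B = X/Γ) is finite
    (F0 : Set V) (hF0fin : F0.Finite)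
    -- the adjacency operator A on ℓ²(VX)
    (A : lp (fun _ : V => ℂ) 2 →L[ℂ] lp (fun _ : V => ℂ) 2)
    (hA : ∀ (f : lp (fun _ : V => ℂ) 2) (v : V),
      A f v = ∑' e : {e : E // o e = v}, f (t (e : E))) :
    ∀ u : ℝ, 0 < |u| → |u| < 1 / (q : ℝ) →
      (((1 + (q : ℝ) * u ^ 2) ^ Nat.card F0 : ℝ) : ℂ) *
          (detGammaV F0 (DeltaOp A q u))⁻¹ =
        (((1 + (q : ℝ) * (1 / ((q : ℝ) * u)) ^ 2) ^ Nat.card F0 : ℝ) : ℂ) *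
          (detGammaV F0 (DeltaOp A q (1 / ((q : ℝ) * u))))⁻¹ := by
  intro u hu huq
  replace hA : IsAdjacencyOp o t A := hA
  have hq : (0 : ℝ) < q := one_div_pos.mp (hu.trans huq)
  have hu0 : u ≠ 0 := abs_pos.mp hu
  have hbar : Function.Involutive bar := hbar_invol
  have hreg_t (v : V) : Nat.card {e // t e = v} = q + 1 :=
    (card_fiber_eq_of_involutive hbar ho_bar v).trans (hreg v)
  have (v : V) : Finite {e // o e = v} := Nat.finite_of_card_ne_zero (by simp [hreg])
  have (v : V) : Finite {e // t e = v} := Nat.finite_of_card_ne_zero (by simp [hreg_t])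
  have hA_norm : ‖A‖ ≤ q + 1 := by
    simpa [Real.sqrt_mul_self (by positivity : (0 : ℝ) ≤ q + 1)] using hA.opNorm_le hreg hreg_t
  have hspec (x : ℝ) (hx : x ∈ spectrum ℝ (DeltaOp A q u)) : x ≠ 0 :=
    (pos_of_mem_spectrum_DeltaOp hA_norm huq hx).ne'
  set k : ℝ := ((q : ℝ) * u ^ 2)⁻¹ with hk_def
  have hk : 0 < k := by positivity
  have hprefactor : 1 + q * (1 / (q * u)) ^ 2 = k * (1 + q * u ^ 2) := by
    rw [hk_def]
    field_simp
    ring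
  rw [DeltaOp_one_div_mul hq.ne' hu0, ← hk_def, hprefactor, detGammaV_smul hF0fin
    (isSelfAdjoint_DeltaOp (hA.isSelfAdjoint hreg hreg_t hbar ho_bar) u) hspec hk.ne',
    abs_of_pos hk]
  have hk' : (k : ℂ) ^ Nat.card F0 ≠ 0 := pow_ne_zero _ (Complex.ofReal_ne_zero.mpr hk.ne')
  push_cast
  rw [mul_pow, mul_inv, mul_mul_mul_comm, mul_inv_cancel₀ hk', one_mul]

/-- Theorem 6.3 (iii): the functional equation
`Ξ_{X,Γ}(u) = (1+qu²)^{|VB|}·det_Γ(Δ(u))^{−1} = Ξ_{X,Γ}(1/(qu))`. -/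
theorem functional_equation_Xi
    {V E Γ : Type*} [Countable V] [Countable E] [DecidableEq V]
    [Group Γ] [Countable Γ] [MulAction Γ V] [MulAction Γ E]
    -- the graph in the sense of Serre, connected
    (o t : E → V) (bar : E → E)
    (hbar_invol : ∀ e, bar (bar e) = e)
    (hbar_ne : ∀ e, bar e ≠ e)
    (ho_bar : ∀ e, o (bar e) = t e)
    (hconn : ∀ u v : V, Relation.ReflTransGen (fun a b => ∃ e, o e = a ∧ t e = b) u v)
    -- (q+1)-regular, q ≥ 1
    (q : ℕ) (hq : 1 ≤ q) (hfib : ∀ v, {e | o e = v}.Finite)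
    (hreg : ∀ v, Nat.card {e // o e = v} = q + 1)
    -- Γ acts by automorphisms of the graph
    (ho_smul : ∀ (γ : Γ) (e : E), o (γ • e) = γ • o e)
    (ht_smul : ∀ (γ : Γ) (e : E), t (γ • e) = γ • t e)
    (hbar_smul : ∀ (γ : Γ) (e : E), bar (γ • e) = γ • bar e)
    -- without inversions
    (hnoinv : ∀ (γ : Γ) (e : E), γ • e ≠ bar e)
    -- freely
    (hfree : ∀ (γ : Γ) (v : V), γ • v = v → γ = 1)
    -- cofinitely: 𝓕₀ (the vertices of B = X/Γ) is finite
    (F0 : Set V) (hF0 : ∀ v : V, ∃! w, w ∈ F0 ∧ ∃ γ : Γ, γ • v = w) (hF0fin : F0.Finite)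
    -- the adjacency operator A on ℓ²(VX)
    (A : lp (fun _ : V => ℂ) 2 →L[ℂ] lp (fun _ : V => ℂ) 2)
    (hA : ∀ (f : lp (fun _ : V => ℂ) 2) (v : V),
      A f v = ∑' e : {e : E // o e = v}, f (t (e : E))) :
    ∀ u : ℝ, 0 < |u| → |u| < 1 / (q : ℝ) →
      (((1 + (q : ℝ) * u ^ 2) ^ Nat.card F0 : ℝ) : ℂ) *
          (detGammaV F0 (DeltaOp A q u))⁻¹ =
        (((1 + (q : ℝ) * (1 / ((q : ℝ) * u)) ^ 2) ^ Nat.card F0 : ℝ) : ℂ) *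
          (detGammaV F0 (DeltaOp A q (1 / ((q : ℝ) * u))))⁻¹ :=
  functional_equation_Xi_general o t bar hbar_invol ho_bar q hreg F0 hF0fin A hA
end
end

section
/- Let {Kₙ} be an amenable exhaustion of X and let B be a bounded operator on ℓ²(VX) commuting with the Γ-action. Then lim_{n→∞} (1/|VKₙ|)·Σ_{v∈VKₙ} ⟨Bδ_v, δ_v⟩ = (1/|𝓕₀|)·Tr_Γ(B), where Tr_Γ(B) = Σ_{v∈𝓕₀} ⟨Bδ_v, δ_v⟩ and |𝓕₀| is the number of Γ-orbits of vertices. Equivalently, Tr(P(Kₙ)BP(Kₙ))/|VKₙ| → Tr_Γ(B)/|𝓕₀|, where P(Kₙ) is the orthogonal projection of ℓ²(VX) onto ℓ²(VKₙ). -/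
/-!
The diagonal `v ↦ ⟨B δ_v, δ_v⟩` of a `Γ`-equivariant operator is `Γ`-invariant and bounded by
`‖B‖`, so the trace over a finite vertex set `K` splits along the orbits as
`∑_{w ∈ 𝓕₀} #{γ | γ • w ∈ K} • ⟨B δ_w, δ_w⟩`, and `|K| = ∑_{w ∈ 𝓕₀} #{γ | γ • w ∈ K}`.
If `γ • w ∈ K` but `γ • w' ∉ K` for `w, w' ∈ 𝓕₀`, the `γ`-translate of a path in `F` from `w` to
`w'` leaves `K` through a boundary vertex of `K` lying in `γ • VF`; the action being free, at most
`|VF| · |𝓕K|` elements `γ` arise this way. So every orbit count is `|K| / |𝓕₀| + O(|𝓕K|)`, and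
amenability gives the limit.
-/

open Finset Filter

namespace Relation.ReflTransGen

lemma exists_rel_mem_notMem {α : Type*} {r : α → α → Prop} {s : Set α} {a b : α}
    (h : ReflTransGen r a b) (ha : a ∈ s) (hb : b ∉ s) : ∃ x y, r x y ∧ x ∈ s ∧ y ∉ s := by
  induction h with
  | refl => exact absurd ha hb
  | @tail c d _ hcd ih =>
    by_cases hc : c ∈ s
    · exact ⟨c, d, hcd, hc, hb⟩
    · exact ih hc

end Relation.ReflTransGen

section WeightedAverage

variable {ι : Type*} {T : Finset ι} {a : ι → ℕ} {c : ℕ}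

lemma abs_div_sum_sub_inv_card_le (ha : ∀ w ∈ T, ∀ w' ∈ T, a w ≤ a w' + c)
    (hpos : 0 < ∑ w ∈ T, a w) {w : ι} (hw : w ∈ T) :
    |(a w : ℝ) / ∑ w ∈ T, (a w : ℝ) - 1 / #T| ≤ c / ∑ w ∈ T, (a w : ℝ) := by
  have hN : (0 : ℝ) < #T := by exact_mod_cast card_pos.2 ⟨w, hw⟩
  have hk : (0 : ℝ) < ∑ w ∈ T, (a w : ℝ) := by exact_mod_cast hpos
  have hdiff : ∀ u ∈ T, ∀ u' ∈ T, (a u : ℝ) - a u' ≤ c := fun u hu u' hu' => by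
    rw [sub_le_iff_le_add']
    exact_mod_cast ha u hu u' hu'
  have hspread : |∑ w' ∈ T, ((a w : ℝ) - a w')| ≤ #T * c :=
    calc _ ≤ ∑ w' ∈ T, |(a w : ℝ) - a w'| := abs_sum_le_sum_abs _ _
      _ ≤ ∑ _w' ∈ T, (c : ℝ) :=
          sum_le_sum fun w' hw' => abs_sub_le_iff.2 ⟨hdiff w hw w' hw', hdiff w' hw' w hw⟩
      _ = #T * c := by rw [sum_const, nsmul_eq_mul]
  have hform : (a w : ℝ) / ∑ w ∈ T, (a w : ℝ) - 1 / #T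
      = (∑ w' ∈ T, ((a w : ℝ) - a w')) / (#T * ∑ w ∈ T, (a w : ℝ)) := by
    rw [sum_sub_distrib, sum_const, nsmul_eq_mul]
    field_simp
  rw [hform, abs_div, abs_of_pos (mul_pos hN hk), div_le_div_iff₀ (mul_pos hN hk) hk]
  calc _ ≤ (#T * c : ℝ) * ∑ w ∈ T, (a w : ℝ) := by gcongr
    _ = _ := by ring

lemma norm_inv_sum_mul_sub_inv_card_mul_le {𝕜 : Type*} [RCLike 𝕜]
    (ha : ∀ w ∈ T, ∀ w' ∈ T, a w ≤ a w' + c) (hpos : 0 < ∑ w ∈ T, a w)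
    {f : ι → 𝕜} {C : ℝ} (hf : ∀ w ∈ T, ‖f w‖ ≤ C) :
    ‖1 / (∑ w ∈ T, a w : 𝕜) * ∑ w ∈ T, (a w : 𝕜) * f w - 1 / (#T : 𝕜) * ∑ w ∈ T, f w‖
      ≤ #T * c * C / ∑ w ∈ T, (a w : ℝ) := by
  have hform : 1 / (∑ w ∈ T, a w : 𝕜) * ∑ w ∈ T, (a w : 𝕜) * f w - 1 / (#T : 𝕜) * ∑ w ∈ T, f w
      = ∑ w ∈ T, (((a w : ℝ) / ∑ w ∈ T, (a w : ℝ) - 1 / #T : ℝ) : 𝕜) * f w := by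
    rw [mul_sum, mul_sum, ← sum_sub_distrib]
    refine sum_congr rfl fun w _ => ?_
    push_cast
    ring
  rw [hform]
  calc _ ≤ ∑ w ∈ T, ‖(((a w : ℝ) / ∑ w ∈ T, (a w : ℝ) - 1 / #T : ℝ) : 𝕜) * f w‖ := norm_sum_le _ _
    _ ≤ ∑ _w ∈ T, c / (∑ w ∈ T, (a w : ℝ)) * C := sum_le_sum fun w hw => by
        rw [norm_mul, RCLike.norm_ofReal]
        exact mul_le_mul (abs_div_sum_sub_inv_card_le ha hpos hw) (hf w hw) (norm_nonneg _)
          (by positivity)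
    _ = _ := by rw [sum_const, nsmul_eq_mul]; ring

end WeightedAverage

section Transporter

variable {Γ V : Type*} [Group Γ] [MulAction Γ V] {T : Finset V}

lemma eq_of_smul_eq_smul_of_mem (hT : ∀ v : V, ∃! w, w ∈ T ∧ ∃ γ : Γ, γ • v = w)
    {w w' : V} (hw : w ∈ T) (hw' : w' ∈ T) {γ γ' : Γ} (h : γ • w = γ' • w') : w = w' :=
  (hT (γ • w)).unique ⟨hw, γ⁻¹, inv_smul_smul γ w⟩ ⟨hw', γ'⁻¹, by rw [h, inv_smul_smul]⟩

variable [IsCancelSMul Γ V]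

variable (Γ) in
noncomputable def transporter (S : Finset V) (w : V) : Finset Γ :=
  S.preimage (· • w) fun _ _ _ _ => IsCancelSMul.right_cancel _ _ w

@[simp]
lemma mem_transporter {S : Finset V} {w : V} {γ : Γ} : γ ∈ transporter Γ S w ↔ γ • w ∈ S :=
  mem_preimage

lemma card_transporter_le (S : Finset V) (w : V) : #(transporter Γ S w) ≤ #S :=
  card_le_card_of_injOn (· • w) (fun _ => mem_transporter.1) fun _ _ _ _ =>
    IsCancelSMul.right_cancel _ _ w

lemma card_transporter_le_add [DecidableEq Γ] {S D Q : Finset V} {w w' : V}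
    (h : transporter Γ S w \ transporter Γ S w' ⊆ Q.biUnion (transporter Γ D)) :
    #(transporter Γ S w) ≤ #(transporter Γ S w') + #Q * #D :=
  calc _ ≤ #(transporter Γ S w \ transporter Γ S w') + #(transporter Γ S w') :=
        card_le_card_sdiff_add_card
    _ ≤ #Q * #D + #(transporter Γ S w') := by
        gcongr
        exact (card_le_card h).trans
          (card_biUnion_le_card_mul _ _ _ fun q _ => card_transporter_le D q)
    _ = _ := add_comm ..

lemma sum_eq_sum_card_transporter_smul {M : Type*} [AddCommMonoid M]
    (hT : ∀ v : V, ∃! w, w ∈ T ∧ ∃ γ : Γ, γ • v = w) {f : V → M}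
    (hf : ∀ (γ : Γ) (v : V), f (γ • v) = f v) (S : Finset V) :
    ∑ v ∈ S, f v = ∑ w ∈ T, #(transporter Γ S w) • f w :=
  calc ∑ v ∈ S, f v = ∑ x ∈ T.sigma (transporter Γ S), f (x.2 • x.1) := by
        refine (sum_bij (fun x _ => x.2 • x.1) ?_ ?_ ?_ fun _ _ => rfl).symm
        · rintro ⟨w, γ⟩ h
          exact mem_transporter.1 (mem_sigma.1 h).2
        · rintro ⟨w, γ⟩ h ⟨w', γ'⟩ h' heq
          obtain rfl := eq_of_smul_eq_smul_of_mem hT (mem_sigma.1 h).1 (mem_sigma.1 h').1 heq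
          obtain rfl := IsCancelSMul.right_cancel _ _ w heq
          rfl
        · intro v hv
          obtain ⟨w, ⟨hw, γ, rfl⟩, -⟩ := hT v
          exact ⟨⟨γ • v, γ⁻¹⟩, mem_sigma.2 ⟨hw, by simpa using hv⟩, inv_smul_smul γ v⟩
    _ = ∑ w ∈ T, ∑ γ ∈ transporter Γ S w, f (γ • w) := sum_sigma _ _ _
    _ = _ := by simp only [hf, sum_const]

lemma card_eq_sum_card_transporter (hT : ∀ v : V, ∃! w, w ∈ T ∧ ∃ γ : Γ, γ • v = w)
    (S : Finset V) : #S = ∑ w ∈ T, #(transporter Γ S w) := by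
  simpa using sum_eq_sum_card_transporter_smul hT (f := fun _ => (1 : ℕ)) (fun _ _ => rfl) S

end Transporter

section Graph

variable {V E Γ : Type*}

open Classical in
noncomputable def vertexBoundary (o t : E → V) (S : Finset V) : Finset V :=
  {v ∈ S | ∃ e, o e = v ∧ t e ∉ S}

lemma mem_vertexBoundary {o t : E → V} {S : Finset V} {v : V} :
    v ∈ vertexBoundary o t S ↔ v ∈ S ∧ ∃ e, o e = v ∧ t e ∉ S := by
  classical
  exact mem_filter

lemma natCard_vertexBoundary (o t : E → V) (S : Finset V) :
    Nat.card {v // v ∈ (S : Set V) ∧ ∃ e, o e = v ∧ t e ∉ (S : Set V)}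
      = #(vertexBoundary o t S) :=
  (Nat.card_congr (Equiv.subtypeEquivRight fun _ => by simp [mem_vertexBoundary])).trans
    (Nat.card_eq_finsetCard _)

variable [Group Γ] [MulAction Γ V] [MulAction Γ E] [IsCancelSMul Γ V] [DecidableEq Γ]
  {o t : E → V} {P : Set E} {Q : Finset V}

lemma sdiff_transporter_subset_biUnion (ho_smul : ∀ (γ : Γ) (e : E), o (γ • e) = γ • o e)
    (ht_smul : ∀ (γ : Γ) (e : E), t (γ • e) = γ • t e) (hPQ : ∀ e ∈ P, o e ∈ Q) {w w' : V}
    (hpath : Relation.ReflTransGen (fun a b => ∃ e ∈ P, o e = a ∧ t e = b) w w')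
    (S : Finset V) :
    transporter Γ S w \ transporter Γ S w' ⊆ Q.biUnion (transporter Γ (vertexBoundary o t S)) := by
  intro γ hγ
  simp only [Finset.mem_sdiff, mem_transporter] at hγ
  obtain ⟨-, -, ⟨e, he, rfl, rfl⟩, hin, hout⟩ :=
    hpath.exists_rel_mem_notMem (s := {x | γ • x ∈ S}) hγ.1 hγ.2
  simp only [mem_biUnion, mem_transporter, mem_vertexBoundary]
  exact ⟨o e, hPQ e he, hin, γ • e, ho_smul γ e, by rwa [ht_smul]⟩

lemma norm_avg_sub_avg_le {𝕜 : Type*} [RCLike 𝕜]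
    (ho_smul : ∀ (γ : Γ) (e : E), o (γ • e) = γ • o e)
    (ht_smul : ∀ (γ : Γ) (e : E), t (γ • e) = γ • t e) (hPQ : ∀ e ∈ P, o e ∈ Q) {T : Finset V}
    (hT : ∀ v : V, ∃! w, w ∈ T ∧ ∃ γ : Γ, γ • v = w)
    (hpath : ∀ w ∈ T, ∀ w' ∈ T,
      Relation.ReflTransGen (fun a b => ∃ e ∈ P, o e = a ∧ t e = b) w w')
    {f : V → 𝕜} (hf : ∀ (γ : Γ) (v : V), f (γ • v) = f v) {C : ℝ} (hC : ∀ v, ‖f v‖ ≤ C)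
    {S : Finset V} (hS : S.Nonempty) :
    ‖1 / (#S : 𝕜) * ∑ v ∈ S, f v - 1 / (#T : 𝕜) * ∑ w ∈ T, f w‖
      ≤ #T * (#Q * #(vertexBoundary o t S)) * C / #S := by
  have hcard := card_eq_sum_card_transporter hT S
  rw [sum_eq_sum_card_transporter_smul hT hf S, hcard]
  push_cast [nsmul_eq_mul]
  simpa only [Nat.cast_mul] using norm_inv_sum_mul_sub_inv_card_mul_le
    (fun w _ w' _ => card_transporter_le_add
      (sdiff_transporter_subset_biUnion ho_smul ht_smul hPQ (hpath w ‹_› w' ‹_›) S))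
    (hcard ▸ hS.card_pos) fun w _ => hC w

end Graph

section Diagonal

variable {𝕜 V Γ : Type*} [NontriviallyNormedField 𝕜] [DecidableEq V] {p : ENNReal}

lemma lp_single_smul_apply [Group Γ] [MulAction Γ V] (γ : Γ) (v : V) (c : 𝕜) (x : V) :
    (lp.single p (γ • v) c : lp (fun _ : V => 𝕜) p) x
      = (lp.single p v c : lp (fun _ : V => 𝕜) p) (γ⁻¹ • x) := by
  simp only [lp.single_apply, Pi.single_apply, inv_smul_eq_iff]

variable [Fact (1 ≤ p)]

lemma diag_smul_eq_of_equivariant [Group Γ] [MulAction Γ V]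
    (B : lp (fun _ : V => 𝕜) p →L[𝕜] lp (fun _ : V => 𝕜) p)
    (hB : ∀ (γ : Γ) (f f' : lp (fun _ : V => 𝕜) p),
      (∀ x, f' x = f (γ⁻¹ • x)) → ∀ x : V, (B f') x = (B f) (γ⁻¹ • x)) (γ : Γ) (v : V) :
    B (lp.single p (γ • v) 1) (γ • v) = B (lp.single p v 1) v := by
  simpa using hB γ _ _ (lp_single_smul_apply γ v 1) (γ • v)

lemma norm_diag_le_opNorm (B : lp (fun _ : V => 𝕜) p →L[𝕜] lp (fun _ : V => 𝕜) p) (v : V) :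
    ‖B (lp.single p v 1) v‖ ≤ ‖B‖ :=
  have hp : 0 < p := zero_lt_one.trans_le Fact.out
  calc _ ≤ ‖B (lp.single p v 1)‖ := lp.norm_apply_le_norm hp.ne' _ v
    _ ≤ ‖B‖ * ‖(lp.single p v 1 : lp (fun _ : V => 𝕜) p)‖ := B.le_opNorm _
    _ = ‖B‖ := by rw [lp.norm_single hp, norm_one, mul_one]

end Diagonal

theorem trace_approximation_general
    {V E Γ : Type*} [Infinite V] [DecidableEq V]
    [Group Γ] [MulAction Γ V] [MulAction Γ E]
    -- the graph in the sense of Serre, connected, countably infinite, bounded degree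
    (o t : E → V) (bar : E → E)
    (hbar_invol : ∀ e, bar (bar e) = e)
    (ho_bar : ∀ e, o (bar e) = t e)
    -- Γ acts by automorphisms of the graph
    (ho_smul : ∀ (γ : Γ) (e : E), o (γ • e) = γ • o e)
    (ht_smul : ∀ (γ : Γ) (e : E), t (γ • e) = γ • t e)
    -- freely
    (hfree : ∀ (γ : Γ) (v : V), γ • v = v → γ = 1)
    -- finite connected fundamental domain F = (VF, EF)
    (EF : Set E) (hEFfin : EF.Finite)
    (VF : Set V) (hVF : VF = o '' EF ∪ t '' EF)
    (hFconn : ∀ u v : V, u ∈ VF → v ∈ VF →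
      Relation.ReflTransGen
        (fun a b => ∃ e, (e ∈ EF ∨ bar e ∈ EF) ∧ o e = a ∧ t e = b) u v)
    -- 𝓕₀ ⊆ VF: one representative of each Γ-orbit of vertices
    (F0 : Set V) (hF0sub : F0 ⊆ VF)
    (hF0 : ∀ v : V, ∃! w, w ∈ F0 ∧ ∃ γ : Γ, γ • v = w)
    -- an amenable exhaustion Kₙ = ∪_{γ∈Eₙ} γF of X
    (Es : ℕ → Finset Γ) (K : ℕ → Set V)
    (hK : ∀ n, K n = ⋃ γ ∈ (Es n : Set Γ), (fun x => γ • x) '' VF)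
    (hKmono : ∀ n, K n ⊆ K (n + 1))
    (hKunion : (⋃ n, K n) = (Set.univ : Set V))
    (hKamen : Filter.Tendsto
      (fun n => (Nat.card {v : V // v ∈ K n ∧ ∃ e, o e = v ∧ t e ∉ K n} : ℝ) /
        (Nat.card (K n) : ℝ)) Filter.atTop (nhds 0))
    -- B: a bounded operator on ℓ²(VX) commuting with the Γ-action
    (B : lp (fun _ : V => ℂ) 2 →L[ℂ] lp (fun _ : V => ℂ) 2)
    (hBcomm : ∀ (γ : Γ) (f f' : lp (fun _ : V => ℂ) 2),
      (∀ x, f' x = f (γ⁻¹ • x)) → ∀ x : V, (B f') x = (B f) (γ⁻¹ • x)) :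
    Filter.Tendsto
      (fun n => (1 / (Nat.card (K n) : ℂ)) *
        ∑' v : K n, (B (lp.single 2 (v : V) 1)) (v : V))
      Filter.atTop
      (nhds ((1 / (Nat.card F0 : ℂ)) *
        ∑' v : F0, (B (lp.single 2 (v : V) 1)) (v : V))) := by
  classical
  have : IsCancelSMul Γ V := isCancelSMul_iff_eq_one_of_smul_eq.2 hfree
  have hVFfin : VF.Finite := hVF ▸ (hEFfin.image o).union (hEFfin.image t)
  obtain ⟨Q, rfl⟩ := hVFfin.exists_finset_coe
  obtain ⟨T, rfl⟩ := (Q.finite_toSet.subset hF0sub).exists_finset_coe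
  have hKfin : ∀ n, (K n).Finite := fun n =>
    hK n ▸ (Es n).finite_toSet.biUnion fun _ _ => Q.finite_toSet.image _
  choose KF hKF using fun n => (hKfin n).exists_finset_coe
  obtain rfl : K = fun n => (KF n : Set V) := funext fun n => (hKF n).symm
  have hKne : ∀ᶠ n in atTop, (KF n).Nonempty := by
    obtain ⟨v⟩ := ‹Infinite V›.nonempty
    obtain ⟨N, hN⟩ := Set.mem_iUnion.1 (hKunion.symm ▸ Set.mem_univ v : v ∈ ⋃ n, (KF n : Set V))
    exact eventually_atTop.2 ⟨N, fun n hn => ⟨v, monotone_nat_of_le_succ hKmono hn hN⟩⟩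
  have hFQ : ∀ e ∈ {e | e ∈ EF ∨ bar e ∈ EF}, o e ∈ Q := by
    rintro e (he | he) <;> rw [← Finset.mem_coe, hVF]
    · exact Or.inl ⟨e, he, rfl⟩
    · exact Or.inr ⟨bar e, he, by rw [← ho_bar, hbar_invol]⟩
  simp only [Nat.card_coe_set_eq, Set.ncard_coe_finset, natCard_vertexBoundary,
    Finset.tsum_subtype' _ fun v => B (lp.single 2 v 1) v] at hKamen ⊢
  rw [← tendsto_sub_nhds_zero_iff]
  refine squeeze_zero_norm' ?_ (by simpa using hKamen.const_mul (#T * #Q * ‖B‖))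
  filter_upwards [hKne] with n hn
  refine (norm_avg_sub_avg_le ho_smul ht_smul hFQ hF0
    (fun w hw w' hw' => hFconn w w' (hF0sub hw) (hF0sub hw'))
    (diag_smul_eq_of_equivariant B hBcomm) (norm_diag_le_opNorm B) hn).trans_eq ?_
  ring

/-- Lemma 7.5: for an amenable exhaustion `{Kₙ}` of `X` and any bounded operator `B`
on `ℓ²(VX)` commuting with the `Γ`-action,
`Tr(P(Kₙ) B P(Kₙ))/|VKₙ| → Tr_Γ(B)/|𝓕₀|`. -/
theorem trace_approximation
    {V E Γ : Type*} [Countable V] [Countable E] [Infinite V] [DecidableEq V]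
    [Group Γ] [Countable Γ] [MulAction Γ V] [MulAction Γ E]
    -- the graph in the sense of Serre, connected, countably infinite, bounded degree
    (o t : E → V) (bar : E → E)
    (hbar_invol : ∀ e, bar (bar e) = e)
    (hbar_ne : ∀ e, bar e ≠ e)
    (ho_bar : ∀ e, o (bar e) = t e)
    (hconn : ∀ u v : V, Relation.ReflTransGen (fun a b => ∃ e, o e = a ∧ t e = b) u v)
    (d : ℕ) (hfib : ∀ v, {e | o e = v}.Finite)
    (hdeg : ∀ v, Nat.card {e // o e = v} ≤ d)
    -- Γ acts by automorphisms of the graph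
    (ho_smul : ∀ (γ : Γ) (e : E), o (γ • e) = γ • o e)
    (ht_smul : ∀ (γ : Γ) (e : E), t (γ • e) = γ • t e)
    (hbar_smul : ∀ (γ : Γ) (e : E), bar (γ • e) = γ • bar e)
    -- without inversions
    (hnoinv : ∀ (γ : Γ) (e : E), γ • e ≠ bar e)
    -- freely
    (hfree : ∀ (γ : Γ) (v : V), γ • v = v → γ = 1)
    -- finite connected fundamental domain F = (VF, EF)
    (EF : Set E) (hEFfin : EF.Finite)
    (hEF : ∀ e : E, ∃! f, f ∈ EF ∧ ∃ γ : Γ, γ • e = f ∨ γ • bar e = f)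
    (VF : Set V) (hVF : VF = o '' EF ∪ t '' EF)
    (hFconn : ∀ u v : V, u ∈ VF → v ∈ VF →
      Relation.ReflTransGen
        (fun a b => ∃ e, (e ∈ EF ∨ bar e ∈ EF) ∧ o e = a ∧ t e = b) u v)
    -- 𝓕₀ ⊆ VF: one representative of each Γ-orbit of vertices
    (F0 : Set V) (hF0sub : F0 ⊆ VF) (hF0fin : F0.Finite)
    (hF0 : ∀ v : V, ∃! w, w ∈ F0 ∧ ∃ γ : Γ, γ • v = w)
    -- an amenable exhaustion Kₙ = ∪_{γ∈Eₙ} γF of X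
    (Es : ℕ → Finset Γ) (K : ℕ → Set V)
    (hK : ∀ n, K n = ⋃ γ ∈ (Es n : Set Γ), (fun x => γ • x) '' VF)
    (hKmono : ∀ n, K n ⊆ K (n + 1))
    (hKunion : (⋃ n, K n) = (Set.univ : Set V))
    (hKamen : Filter.Tendsto
      (fun n => (Nat.card {v : V // v ∈ K n ∧ ∃ e, o e = v ∧ t e ∉ K n} : ℝ) /
        (Nat.card (K n) : ℝ)) Filter.atTop (nhds 0))
    -- B: a bounded operator on ℓ²(VX) commuting with the Γ-action
    (B : lp (fun _ : V => ℂ) 2 →L[ℂ] lp (fun _ : V => ℂ) 2)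
    (hBcomm : ∀ (γ : Γ) (f f' : lp (fun _ : V => ℂ) 2),
      (∀ x, f' x = f (γ⁻¹ • x)) → ∀ x : V, (B f') x = (B f) (γ⁻¹ • x)) :
    Filter.Tendsto
      (fun n => (1 / (Nat.card (K n) : ℂ)) *
        ∑' v : K n, (B (lp.single 2 (v : V) 1)) (v : V))
      Filter.atTop
      (nhds ((1 / (Nat.card F0 : ℂ)) *
        ∑' v : F0, (B (lp.single 2 (v : V) 1)) (v : V))) :=
  trace_approximation_general o t bar hbar_invol ho_bar ho_smul ht_smul hfree EF hEFfin VF hVF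
    hFconn F0 hF0sub hF0 Es K hK hKmono hKunion hKamen B hBcomm
end
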